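/- arXiv:1311.5918 — 2 statements merged into one kernel-verified Lean document; each statement's English description precedes it below -/
import Mathlib

section
/- For the (N*−η*+1)×(N*−η*+1) transition matrix Q with Q(η*, η*) = p, Q(i, i−1) = p for η*+1 ≤ i ≤ N*, and Q(i, N*) = 1−p for all i (all other entries zero), every eigenvalue λ of Q satisfies λ = 1 or λ = 0. -/
/-- For the transition matrix `Q` on states `{η*, …, N*}` with
`Q(η*,η*) = p`, `Q(i,i−1) = p` for `i > η*`, `Q(i,N*) = 1−p` for all `i`
(all other entries zero), every (real) eigenvalue `λ` of `Q` equals `1` or `0`. -/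
theorem stmt_11 (ηstar Nstar : ℕ) (hlt : ηstar < Nstar)
    (p : ℝ) (hp0 : 0 < p) (hp1 : p < 1)
    (Q : Matrix ↥(Finset.Icc ηstar Nstar) ↥(Finset.Icc ηstar Nstar) ℝ)
    (hQ : ∀ i j : ↥(Finset.Icc ηstar Nstar),
      Q i j = (if (j : ℕ) = max ((i : ℕ) - 1) ηstar then p else 0) +
        (if (j : ℕ) = Nstar then 1 - p else 0)) :
    ∀ (lam : ℝ) (x : ↥(Finset.Icc ηstar Nstar) → ℝ),
      x ≠ 0 → Q.mulVec x = lam • x → lam = 1 ∨ lam = 0 := by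
  intro lam x hx hev
  by_contra hcon
  push_neg at hcon
  obtain ⟨h1, h0⟩ := hcon
  have hmemN : Nstar ∈ Finset.Icc ηstar Nstar := by
    simp [Finset.mem_Icc, hlt.le]
  have hmem0 : ηstar ∈ Finset.Icc ηstar Nstar := by
    simp [Finset.mem_Icc, hlt.le]
  -- auxiliary: single-entry sums
  have hsum : ∀ (c : ℝ) (m : ℕ) (hm : m ∈ Finset.Icc ηstar Nstar),
      (∑ j : ↥(Finset.Icc ηstar Nstar),
        (if (j : ℕ) = m then c else 0) * x j) = c * x ⟨m, hm⟩ := by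
    intro c m hm
    have : ∀ j : ↥(Finset.Icc ηstar Nstar),
        ((if (j : ℕ) = m then c else 0) * x j)
          = (if j = ⟨m, hm⟩ then c * x j else 0) := by
      intro j
      by_cases h : j = ⟨m, hm⟩
      · simp [h]
      · have h' : (j : ℕ) ≠ m := by
          intro hc; exact h (Subtype.ext hc)
        simp [h, h']
    rw [Finset.sum_congr rfl fun j _ => this j]
    simp
  -- membership of predecessor
  have hpred : ∀ i : ↥(Finset.Icc ηstar Nstar),
      max ((i : ℕ) - 1) ηstar ∈ Finset.Icc ηstar Nstar := by
    intro i
    have hi := i.2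
    rw [Finset.mem_Icc] at hi ⊢
    refine ⟨le_max_right _ _, ?_⟩
    exact max_le (le_trans (Nat.sub_le _ _) hi.2) hlt.le
  -- key eigenvector equation
  have key : ∀ i : ↥(Finset.Icc ηstar Nstar),
      lam * x i = p * x ⟨max ((i : ℕ) - 1) ηstar, hpred i⟩
        + (1 - p) * x ⟨Nstar, hmemN⟩ := by
    intro i
    have h := congrFun hev i
    rw [Matrix.mulVec, dotProduct] at h
    have hrw : (∑ j, Q i j * x j)
        = (∑ j : ↥(Finset.Icc ηstar Nstar),
            (if (j : ℕ) = max ((i : ℕ) - 1) ηstar then p else 0) * x j)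
          + (∑ j : ↥(Finset.Icc ηstar Nstar),
            (if (j : ℕ) = Nstar then (1 - p) else 0) * x j) := by
      rw [← Finset.sum_add_distrib]
      refine Finset.sum_congr rfl fun j _ => ?_
      rw [hQ i j, add_mul]
    rw [hrw, hsum p _ (hpred i), hsum (1 - p) _ hmemN] at h
    simpa [Pi.smul_apply, smul_eq_mul] using h.symm
  set a := x ⟨ηstar, hmem0⟩ with ha
  have hbase : lam * a = p * a + (1 - p) * x ⟨Nstar, hmemN⟩ := by
    have := key ⟨ηstar, hmem0⟩
    have hmax : max (ηstar - 1) ηstar = ηstar := max_eq_right (Nat.sub_le _ _)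
    simpa [hmax] using this
  -- x is constant
  have hconst : ∀ n, ηstar ≤ n → ∀ h : n ∈ Finset.Icc ηstar Nstar,
      x ⟨n, h⟩ = a := by
    intro n hn
    induction n, hn using Nat.le_induction with
    | base => intro h; rfl
    | succ n hn ih =>
      intro h
      have hn' : n ∈ Finset.Icc ηstar Nstar := by
        rw [Finset.mem_Icc] at h ⊢
        exact ⟨hn, le_trans (Nat.le_succ n) h.2⟩
      have hkey := key ⟨n + 1, h⟩
      have hmax : max ((n + 1) - 1) ηstar = n := by
        simp [max_eq_left hn]
      have hxn : x ⟨max ((n + 1) - 1) ηstar, hpred ⟨n + 1, h⟩⟩ = a := by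
        rw [show (⟨max ((n + 1) - 1) ηstar, hpred ⟨n + 1, h⟩⟩ :
            ↥(Finset.Icc ηstar Nstar)) = ⟨n, hn'⟩ from Subtype.ext hmax]
        exact ih hn'
      rw [hxn] at hkey
      have : lam * x ⟨n + 1, h⟩ = lam * a := by rw [hkey, hbase]
      exact mul_left_cancel₀ h0 this
  have hxall : ∀ i : ↥(Finset.Icc ηstar Nstar), x i = a := by
    intro i
    have hi := i.2
    rw [Finset.mem_Icc] at hi
    have := hconst (i : ℕ) hi.1 i.2
    simpa using this
  have hane : a ≠ 0 := by
    intro hz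
    apply hx
    funext i
    rw [hxall i, hz]; rfl
  have hNa : x ⟨Nstar, hmemN⟩ = a := hxall _
  rw [hNa] at hbase
  have : (lam - 1) * a = 0 := by ring_nf; ring_nf at hbase; linarith
  rcases mul_eq_zero.mp this with h | h
  · exact h1 (by linarith)
  · exact hane h
end

section
/- If (x_1, …, x_K) is a finite sequence of states in which every state of S appears at least once, then the composition T̃ = T_{x_1} T_{x_2} ⋯ T_{x_K} of asynchronous Bellman operators is a sup-norm contraction on ℝ^{|S|} with constant α. -/
lemma inf'_abs_sub_le' {Act : Type*} (s : Finset Act) (h : s.Nonempty)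
    (f g : Act → ℝ) (ε : ℝ) (hfg : ∀ a ∈ s, |f a - g a| ≤ ε) :
    |s.inf' h f - s.inf' h g| ≤ ε := by
  rw [abs_sub_le_iff]
  constructor
  · obtain ⟨a, ha, hag⟩ := s.exists_mem_eq_inf' h g
    have h1 : s.inf' h f ≤ f a := Finset.inf'_le _ ha
    have h2 := abs_sub_le_iff.mp (hfg a ha)
    rw [hag]; linarith [h2.1]
  · obtain ⟨a, ha, haf⟩ := s.exists_mem_eq_inf' h f
    have h1 : s.inf' h g ≤ g a := Finset.inf'_le _ ha
    have h2 := abs_sub_le_iff.mp (hfg a ha)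
    rw [haf]; linarith [h2.2]

/-- If every state of `S` appears at least once in the finite sequence
`(x_1, …, x_K)`, then the composition `T̃ = T_{x_1} ∘ T_{x_2} ∘ ⋯ ∘ T_{x_K}`
of asynchronous Bellman operators is a sup-norm contraction with constant `α`. -/
theorem stmt_17 {S Act : Type*} [Fintype S] [Nonempty S] [DecidableEq S]
    (A : S → Finset Act) (hA : ∀ s, (A s).Nonempty)
    (c : S → Act → ℝ) (Q : S → Act → S → ℝ)
    (hQnonneg : ∀ s a j, a ∈ A s → 0 ≤ Q s a j)
    (hQsum : ∀ s a, a ∈ A s → ∑ j, Q s a j = 1)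
    (α : ℝ) (hα0 : 0 < α) (hα1 : α < 1)
    (T : S → (S → ℝ) → (S → ℝ))
    (hT : ∀ x (v : S → ℝ) s, T x v s =
      if s = x then (A x).inf' (hA x) (fun a => c x a + α * ∑ j, Q x a j * v j)
      else v s)
    (l : List S) (hl : ∀ s : S, s ∈ l) :
    ∀ v w : S → ℝ,
      ‖l.foldr T v - l.foldr T w‖ ≤ α * ‖v - w‖ := by
  have key : ∀ L : List S, ∀ v w : S → ℝ, ∀ s : S,
      |L.foldr T v s - L.foldr T w s| ≤ ‖v - w‖ ∧
      (s ∈ L → |L.foldr T v s - L.foldr T w s| ≤ α * ‖v - w‖) := by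
    intro L
    induction L with
    | nil =>
      intro v w s
      refine ⟨?_, by simp⟩
      have := norm_le_pi_norm (v - w) s
      simpa [Real.norm_eq_abs] using this
    | cons x L ih =>
      intro v w s
      have hfv : (x :: L).foldr T v = T x (L.foldr T v) := rfl
      have hfw : (x :: L).foldr T w = T x (L.foldr T w) := rfl
      by_cases hs : s = x
      · subst hs
        have hb : |(s :: L).foldr T v s - (s :: L).foldr T w s| ≤ α * ‖v - w‖ := by
          rw [hfv, hfw, hT, hT]
          simp only [if_pos rfl]
          apply inf'_abs_sub_le' _ (hA s)
          intro a ha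
          have hdiff :
              (c s a + α * ∑ j, Q s a j * L.foldr T v j)
                - (c s a + α * ∑ j, Q s a j * L.foldr T w j)
              = α * ∑ j, Q s a j * (L.foldr T v j - L.foldr T w j) := by
            simp only [Finset.mul_sum, mul_sub, Finset.sum_sub_distrib]
            ring
          rw [hdiff, abs_mul, abs_of_pos hα0]
          have hsum : |∑ j, Q s a j * (L.foldr T v j - L.foldr T w j)| ≤ ‖v - w‖ := by
            calc |∑ j, Q s a j * (L.foldr T v j - L.foldr T w j)|
                ≤ ∑ j, |Q s a j * (L.foldr T v j - L.foldr T w j)| :=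
                  Finset.abs_sum_le_sum_abs _ _
              _ ≤ ∑ j, Q s a j * ‖v - w‖ := by
                  apply Finset.sum_le_sum
                  intro j _
                  rw [abs_mul, abs_of_nonneg (hQnonneg s a j ha)]
                  exact mul_le_mul_of_nonneg_left ((ih v w j).1) (hQnonneg s a j ha)
              _ = ‖v - w‖ := by
                  rw [← Finset.sum_mul, hQsum s a ha, one_mul]
          exact mul_le_mul_of_nonneg_left hsum (le_of_lt hα0)
        refine ⟨hb.trans ?_, fun _ => hb⟩
        nlinarith [norm_nonneg (v - w)]
      · have hv : (x :: L).foldr T v s = L.foldr T v s := by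
          rw [hfv, hT, if_neg hs]
        have hw : (x :: L).foldr T w s = L.foldr T w s := by
          rw [hfw, hT, if_neg hs]
        rw [hv, hw]
        refine ⟨(ih v w s).1, fun hmem => ?_⟩
        have : s ∈ L := by
          rcases List.mem_cons.mp hmem with h | h
          · exact absurd h hs
          · exact h
        exact (ih v w s).2 this
  intro v w
  have h0 : 0 ≤ α * ‖v - w‖ := mul_nonneg hα0.le (norm_nonneg _)
  rw [pi_norm_le_iff_of_nonneg h0]
  intro s
  have := (key l v w s).2 (hl s)
  simpa [Real.norm_eq_abs, Pi.sub_apply] using this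
end
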